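/- For the abstraction of multipolynomials (tuples of polynomials, with abstraction the matrix whose i-th column is α(Pᵢ)): the abstraction of a coefficient-wise-max union of multipolynomials equals the entrywise union of their abstractions, i.e., α(P ⊔ Q) = α(P) ∪ α(Q). -/

import Mathlib

/-!
At every coordinate, all monomials but one (`Xᵢ`, resp. the constant) abstract to `0` or `M`,
and adding `0` or `M` in `Val` is taking a maximum. Hence `α(p)ᵢ` is the maximum of the term
abstractions over the support of `p`. The term abstraction is monotone in the coefficient, so
it commutes with the coefficient-wise maximum, and a maximum over `supp p ∪ supp q` splits.
-/

/-- The iSAPP algebra of abstract values: `0 < L < A < M`. -/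
inductive Val : Type
  | z | L | A | M
  deriving DecidableEq, Repr

instance : Fintype Val :=
  ⟨{Val.z, Val.L, Val.A, Val.M}, fun x => by cases x <;> decide⟩

namespace Val

def toNat : Val → ℕ
  | z => 0 | L => 1 | A => 2 | M => 3

instance : LinearOrder Val := LinearOrder.lift' toNat (by decide)

/-- The iSAPP addition table: `0` neutral, `L+L = A`, `L+A = A+A = A`, `M` absorbing. -/
def add : Val → Val → Val
  | z, x => x
  | x, z => x
  | M, _ => M
  | _, M => M
  | L, L => A
  | L, A => A
  | A, L => A
  | A, A => A

/-- The iSAPP multiplication table: `0` absorbing, `L` neutral,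
`A×A = A`, `A×M = M×A = M×M = M`. -/
def mul : Val → Val → Val
  | z, _ => z
  | _, z => z
  | L, x => x
  | x, L => x
  | A, A => A
  | A, M => M
  | M, A => M
  | M, M => M

end Val

instance : Zero Val := ⟨Val.z⟩
instance : Add Val := ⟨Val.add⟩
instance : One Val := ⟨Val.L⟩
instance : Mul Val := ⟨Val.mul⟩

instance : CommSemiring Val where
  add := Val.add
  add_assoc := by decide
  zero := Val.z
  zero_add := by decide
  add_zero := by decide
  nsmul := nsmulRec
  add_comm := by decide
  mul := Val.mul
  left_distrib := by decide
  right_distrib := by decide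
  zero_mul := by decide
  mul_zero := by decide
  mul_assoc := by decide
  one := Val.L
  one_mul := by decide
  mul_one := by decide
  mul_comm := by decide

/-- Monomial-wise (coefficient-wise) maximum of two polynomials with ℕ coefficients. -/
noncomputable def pUnion {nv : ℕ} (p q : MvPolynomial (Fin nv) ℕ) :
    MvPolynomial (Fin nv) ℕ :=
  letI := Classical.decEq (Fin nv →₀ ℕ)
  ∑ m ∈ p.support ∪ q.support, MvPolynomial.monomial m (max (p.coeff m) (q.coeff m))

/-- Coefficient-wise order on polynomials. -/
def pLe {nv : ℕ} (p q : MvPolynomial (Fin nv) ℕ) : Prop :=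
  ∀ m, p.coeff m ≤ q.coeff m

open Classical in
/-- Abstraction of a single monomial `c·X^m` (as it appears in the canonical form):
a constant `c` contributes `L` (if `c = 1`) or `A` (if `c > 1`) to the last coordinate;
a degree-one monomial `c·Xᵢ` contributes `L` (if `c = 1`) or `A` (if `c > 1`) at
coordinate `i`; any other monomial contributes `M` at every involved coordinate
(the product rule `α(q·r) = M·α(q) ∪ M·α(r)`). -/
noncomputable def monoAbs {nv : ℕ} (m : Fin nv →₀ ℕ) (c : ℕ) : Fin (nv + 1) → Val :=
  fun i =>
    if h : (i : ℕ) < nv then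
      if m ⟨i, h⟩ = 0 then Val.z
      else if (m.sum fun _ e => e) = 1 then (if c = 1 then Val.L else Val.A)
      else Val.M
    else
      if m = 0 then (if c = 0 then Val.z else if c = 1 then Val.L else Val.A)
      else if (m.sum fun _ e => e) = 1 then Val.z
      else if 2 ≤ c then Val.M else Val.z

/-- Abstraction of a polynomial, as a vector in `Values^{n+1}`:
the sum (in the `Val` semiring) of the abstractions of its monomials. -/
noncomputable def polAbs {nv : ℕ} (p : MvPolynomial (Fin nv) ℕ) : Fin (nv + 1) → Val :=
  fun i => ∑ m ∈ p.support, monoAbs m (p.coeff m) i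

namespace Val

instance : OrderBot Val where
  bot := 0
  bot_le a := by cases a <;> decide

def Flat (y : Val) : Prop := y = 0 ∨ y = M

lemma Flat.max {x y : Val} (hx : Flat x) (hy : Flat y) : Flat (max x y) := by
  rcases max_choice x y with h | h <;> rw [h] <;> assumption

lemma add_eq_max_of_flat (x : Val) {y : Val} (hy : Flat y) : x + y = max x y := by
  rcases hy with rfl | rfl <;> cases x <;> rfl

lemma flat_sup {ι : Type*} {s : Finset ι} {g : ι → Val} (hg : ∀ a ∈ s, Flat (g a)) :
    Flat (s.sup g) :=
  Finset.sup_induction (Or.inl rfl) (fun _ hx _ hy => hx.max hy) hg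

lemma sum_eq_sup_of_flat {ι : Type*} [DecidableEq ι] (s : Finset ι) (g : ι → Val) (a₀ : ι)
    (hg : ∀ a ∈ s, a ≠ a₀ → Flat (g a)) : ∑ a ∈ s, g a = s.sup g := by
  induction s using Finset.induction with
  | empty => rfl
  | insert a s ha ih =>
    have hs : ∀ b ∈ s, b ≠ a₀ → Flat (g b) := fun b hb => hg b (Finset.mem_insert_of_mem hb)
    rw [Finset.sum_insert ha, Finset.sup_insert, ih hs]
    by_cases ha₀ : a = a₀
    · subst ha₀
      exact add_eq_max_of_flat _ (flat_sup fun b hb => hs b hb (ne_of_mem_of_not_mem hb ha))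
    · rw [add_comm, add_eq_max_of_flat _ (hg a (Finset.mem_insert_self a s) ha₀), max_comm]

end Val

lemma Finsupp.eq_single_one_of_degree_eq_one {σ : Type*} {m : σ →₀ ℕ} {a : σ}
    (ha : m a ≠ 0) (hm : m.degree = 1) : m = Finsupp.single a 1 := by
  have hsplit := Finsupp.single_add_erase a m
  have hdeg : m a + (m.erase a).degree = 1 := by
    rw [← Finsupp.degree_single a (m a), ← map_add, hsplit, hm]
  have herase : m.erase a = 0 := (Finsupp.degree_eq_zero_iff _).1 (by omega)
  rw [← hsplit, herase, add_zero, show m a = 1 by omega]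

section Abstraction

variable {nv : ℕ}

/-- Only the monomial `Xᵢ` (for `i < nv`) or the constant monomial (for the last coordinate)
can contribute `L` or `A` at coordinate `i`. -/
lemma exists_monoAbs_flat (i : Fin (nv + 1)) :
    ∃ m₀ : Fin nv →₀ ℕ, ∀ m ≠ m₀, ∀ c, Val.Flat (monoAbs m c i) := by
  by_cases h : (i : ℕ) < nv
  · refine ⟨Finsupp.single ⟨i, h⟩ 1, fun m hm c => ?_⟩
    simp only [monoAbs, dif_pos h]
    split_ifs with h₀ h₁
    · exact Or.inl rfl
    iterate 2 exact absurd (Finsupp.eq_single_one_of_degree_eq_one h₀ h₁) hm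
    · exact Or.inr rfl
  · refine ⟨0, fun m hm c => ?_⟩
    simp only [monoAbs, dif_neg h, if_neg hm]
    split_ifs
    all_goals first | exact Or.inl rfl | exact Or.inr rfl

/-- `monoAbs m 0` need not be `0` (it is `A` on `Xᵢ`); forcing it to `0` makes the abstraction
monotone in the coefficient. -/
noncomputable def termAbs (m : Fin nv →₀ ℕ) (c : ℕ) (i : Fin (nv + 1)) : Val :=
  if c = 0 then 0 else monoAbs m c i

lemma termAbs_monotone (m : Fin nv →₀ ℕ) (i : Fin (nv + 1)) :
    Monotone fun c => termAbs m c i := by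
  intro c d hcd
  simp only [termAbs, monoAbs]
  split_ifs <;> first | omega | decide

lemma polAbs_eq_sup (p : MvPolynomial (Fin nv) ℕ) (i : Fin (nv + 1)) :
    polAbs p i = p.support.sup fun m => termAbs m (p.coeff m) i := by
  obtain ⟨m₀, hm₀⟩ := exists_monoAbs_flat i
  rw [polAbs, Val.sum_eq_sup_of_flat _ _ m₀ fun m _ hm => hm₀ m hm _]
  refine Finset.sup_congr rfl fun m hm => ?_
  rw [termAbs, if_neg (MvPolynomial.mem_support_iff.1 hm)]

lemma polAbs_eq_sup_of_support_subset {p : MvPolynomial (Fin nv) ℕ}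
    {s : Finset (Fin nv →₀ ℕ)} (hs : p.support ⊆ s) (i : Fin (nv + 1)) : polAbs p i = s.sup fun m => termAbs m (p.coeff m) i := by
  rw [polAbs_eq_sup, ← Finset.union_sdiff_of_subset hs, Finset.sup_union]
  suffices h : (s \ p.support).sup (fun m => termAbs m (p.coeff m) i) = ⊥ by
    rw [h, sup_bot_eq]
  refine (Finset.sup_eq_bot_iff _ _).2 fun m hm => ?_
  rw [termAbs, if_pos (MvPolynomial.notMem_support_iff.1 (Finset.mem_sdiff.1 hm).2)]
  rfl

lemma coeff_pUnion (p q : MvPolynomial (Fin nv) ℕ) (m : Fin nv →₀ ℕ) :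
    (pUnion p q).coeff m = max (p.coeff m) (q.coeff m) := by
  rw [pUnion, MvPolynomial.coeff_sum]
  simp only [MvPolynomial.coeff_monomial, Finset.sum_ite_eq', Finset.mem_union,
    MvPolynomial.mem_support_iff]
  split_ifs with hm
  · rfl
  · push Not at hm
    simp [hm.1, hm.2]

lemma support_pUnion (p q : MvPolynomial (Fin nv) ℕ) :
    (pUnion p q).support = p.support ∪ q.support := by
  ext m
  simp only [MvPolynomial.mem_support_iff, coeff_pUnion, Finset.mem_union]
  omega

end Abstraction

/-- Lemma `multipolsum` of iSAPP: for multipolynomials (tuples of polynomials, abstracted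
columnwise), `α(P ⊔ Q) = α(P) ∪ α(Q)` entrywise. -/
theorem isapp_multipolAbs_pUnion {nv : ℕ}
    (P Q : Fin nv → MvPolynomial (Fin nv) ℕ) :
    (fun (i : Fin (nv + 1)) (j : Fin nv) => polAbs (pUnion (P j) (Q j)) i) =
      fun i j => max (polAbs (P j) i) (polAbs (Q j) i) := by
  funext i j
  rw [polAbs_eq_sup_of_support_subset (support_pUnion (P j) (Q j)).subset,
    polAbs_eq_sup_of_support_subset Finset.subset_union_left,
    polAbs_eq_sup_of_support_subset Finset.subset_union_right, ← Finset.sup_sup]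
  refine Finset.sup_congr rfl fun m _ => ?_
  rw [coeff_pUnion]
  exact (termAbs_monotone m i).map_max
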